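/- Prefix invariant of paths: for every context-free grammar G, local lexing ℓℓ = (Lex, Sel), input D ∈ Σ*, position k ∈ {0,…,|D|} and stage u ≥ 0, every path p ∈ 𝒫ₖ^u satisfies [p] ∈ ℒ_prefix, and its character sequence p̄ is a prefix of D (i.e., p̄_i = D_i for all 0 ≤ i < |p̄| and |p̄| ≤ |D|). -/

import Mathlib

namespace LL
section Defs

/-- A context-free grammar `(𝔑, 𝔗, ℜ, 𝔖)`: nonterminals are the type `N`,
terminals the type `T` (automatically disjoint), `rules ⊆ 𝔑 × (𝔑 ∪ 𝔗)*`,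
and `start ∈ 𝔑`. -/
structure CFG (N T : Type*) where
  rules : Set (N × List (N ⊕ T))
  start : N

variable {N T C : Type*}

/-- One derivation step `α ⇒ β`. -/
def CFG.Step (G : CFG N T) (α β : List (N ⊕ T)) : Prop :=
  ∃ a A b γ, α = a ++ Sum.inl A :: b ∧ β = a ++ γ ++ b ∧ (A, γ) ∈ G.rules

/-- `⇒*`, the reflexive transitive closure of `⇒`. -/
def CFG.Derives (G : CFG N T) : List (N ⊕ T) → List (N ⊕ T) → Prop :=
  Relation.ReflTransGen G.Step

/-- `ℒ = { w ∈ 𝔗* | 𝔖 ⇒* w }`. -/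
def CFG.lang (G : CFG N T) : Set (List T) :=
  {w | G.Derives [Sum.inl G.start] (w.map Sum.inr)}

/-- `ℒ_prefix = { w ∈ 𝔗* | ∃ α. 𝔖 ⇒* w α }`. -/
def CFG.langPrefix (G : CFG N T) : Set (List T) :=
  {w | ∃ α, G.Derives [Sum.inl G.start] (w.map Sum.inr ++ α)}

/-- A token is a pair `(t, c) ∈ 𝔗 × Σ*`. -/
abbrev Token (T C : Type*) := T × List C

/-- `p̄`, the characters of a token sequence. -/
def chars (p : List (Token T C)) : List C := (p.map Prod.snd).flatten

/-- `[p]`, the terminals of a token sequence. -/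
def terms (p : List (Token T C)) : List T := p.map Prod.fst

/-- `limit f X = ⋃ n, fⁿ(X)`. -/
def limit {α : Type*} (f : Set α → Set α) (X : Set α) : Set α := ⋃ n, f^[n] X

/-- A local lexing `(Lex, Sel)` with respect to terminals `T` and characters `C`. -/
structure LocalLexing (T C : Type*) where
  Lex : T → List C → ℕ → Set (Token T C)
  Sel : Set (Token T C) → Set (Token T C) → Set (Token T C)
  lex_sound : ∀ t D k, ∀ x ∈ Lex t D k,
      x.1 = t ∧ k + x.2.length ≤ D.length ∧ x.2 <+: D.drop k
  sel_sound : ∀ A B : Set (Token T C), A ⊆ B → A ⊆ Sel A B ∧ Sel A B ⊆ B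

variable (G : CFG N T) (ll : LocalLexing T C) (D : List C)

/-- `𝒳ₖ = { x | x ∈ Lex([x])(D, k) }`. -/
def Xtok (k : ℕ) : Set (Token T C) := {x | x ∈ ll.Lex x.1 D k}

/-- `𝒲` of a path set `P` at position `k`:
`{ x ∈ 𝒳ₖ | ∃ p ∈ P. |p̄| = k ∧ [p x] ∈ ℒ_prefix }`. -/
def Wtok (P : Set (List (Token T C))) (k : ℕ) : Set (Token T C) :=
  {x | x ∈ Xtok ll D k ∧ ∃ p ∈ P, (chars p).length = k ∧ terms (p ++ [x]) ∈ G.langPrefix}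

/-- `Appendₖ T P = P ∪ { p t | p ∈ P ∧ |p̄| = k ∧ t ∈ T ∧ [p t] ∈ ℒ_prefix }`. -/
def Append (k : ℕ) (Ts : Set (Token T C)) (P : Set (List (Token T C))) :
    Set (List (Token T C)) :=
  P ∪ {q | ∃ p ∈ P, ∃ t ∈ Ts, q = p ++ [t] ∧ (chars p).length = k ∧ terms q ∈ G.langPrefix}

/-- The pair `(𝒫ₖᵘ, 𝒵ₖᵘ)`, starting from the path set `P₀` at position `k`:
`𝒵ₖ⁰ = ∅`, `𝒵ₖᵘ⁺¹ = Sel(𝒵ₖᵘ, 𝒲ₖᵘ⁺¹)` and `𝒫ₖᵘ⁺¹ = limit (Appendₖ 𝒵ₖᵘ⁺¹) 𝒫ₖᵘ`. -/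
def Pstage (k : ℕ) (P₀ : Set (List (Token T C))) :
    ℕ → Set (List (Token T C)) × Set (Token T C)
  | 0 => (P₀, ∅)
  | u + 1 =>
      let PZ := Pstage k P₀ u
      let Z := ll.Sel PZ.2 (Wtok G ll D PZ.1 k)
      (limit (Append G k Z) PZ.1, Z)

/-- `𝒫ₖ⁰`:  `𝒫₀⁰ = {ε}` and `𝒫ₖ₊₁⁰ = 𝒫ₖ^∞`. -/
def Pinit : ℕ → Set (List (Token T C))
  | 0 => {[]}
  | k + 1 => ⋃ u, (Pstage G ll D k (Pinit k) u).1

/-- The path sets `𝒫ₖᵘ`. -/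
def Pset (k u : ℕ) : Set (List (Token T C)) := (Pstage G ll D k (Pinit G ll D k) u).1

/-- The selected token sets `𝒵ₖᵘ`. -/
def Zset (k u : ℕ) : Set (Token T C) := (Pstage G ll D k (Pinit G ll D k) u).2

/-- The admissible token sets `𝒲ₖᵘ`. -/
def Wset (k u : ℕ) : Set (Token T C) := Wtok G ll D (Pset G ll D k u) k

/-- `𝒵ₖ^∞ = ⋃ u, 𝒵ₖᵘ`. -/
def Zinf (k : ℕ) : Set (Token T C) := ⋃ u, Zset G ll D k u

/-- `𝕻 = 𝒫_{|D|}^∞`. -/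
def PP : Set (List (Token T C)) := ⋃ u, Pset G ll D D.length u

/-- `ℓℓ(D) = { p ∈ 𝕻 | |p̄| = |D| ∧ [p] ∈ ℒ }`. -/
def sem : Set (List (Token T C)) :=
  {p | p ∈ PP G ll D ∧ (chars p).length = D.length ∧ terms p ∈ G.lang}

/-- An Earley item `(lhs → pre • post, origin, bin)`. -/
structure EItem (N T : Type*) where
  lhs : N
  pre : List (N ⊕ T)
  post : List (N ⊕ T)
  origin : ℕ
  bin : ℕ

/-- `Init = { (𝔖 → • α, 0, 0) | (𝔖 → α) ∈ ℜ }`. -/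
def EInit : Set (EItem N T) :=
  {x | ∃ α, (G.start, α) ∈ G.rules ∧ x = ⟨G.start, [], α, 0, 0⟩}

/-- The `Predict` operator. -/
def Predict (k : ℕ) (I : Set (EItem N T)) : Set (EItem N T) :=
  I ∪ {x | ∃ M γ, (M, γ) ∈ G.rules ∧
        (∃ N' α β i, (⟨N', α, Sum.inl M :: β, i, k⟩ : EItem N T) ∈ I) ∧
        x = ⟨M, [], γ, k, k⟩}

/-- The `Complete` operator. -/
def Complete (k : ℕ) (I : Set (EItem N T)) : Set (EItem N T) :=
  I ∪ {x | ∃ N' α M β i j γ,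
        (⟨N', α, Sum.inl M :: β, i, j⟩ : EItem N T) ∈ I ∧
        (⟨M, γ, [], j, k⟩ : EItem N T) ∈ I ∧
        x = ⟨N', α ++ [Sum.inl M], β, i, k⟩}

/-- The token-based `Scan` operator. -/
def Scan (Ts : Set (Token T C)) (k : ℕ) (I : Set (EItem N T)) : Set (EItem N T) :=
  I ∪ {x | ∃ N' α X c β i, (X, c) ∈ Ts ∧
        (⟨N', α, Sum.inr X :: β, i, k⟩ : EItem N T) ∈ I ∧
        x = ⟨N', α ++ [Sum.inr X], β, i, k + c.length⟩}

/-- `Tokens T k I = Sel(T, { x | ∃ X N α β i. (N → α • X β, i, k) ∈ I ∧ x ∈ Lex(X)(D, k) })`. -/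
def Tokens (Ts : Set (Token T C)) (k : ℕ) (I : Set (EItem N T)) : Set (Token T C) :=
  ll.Sel Ts {x | ∃ X N' α β i, (⟨N', α, Sum.inr X :: β, i, k⟩ : EItem N T) ∈ I ∧
        x ∈ ll.Lex X D k}

/-- `πₖ T I = limit (Scan T k ∘ Complete k ∘ Predict k) I`. -/
def pik (Ts : Set (Token T C)) (k : ℕ) (I : Set (EItem N T)) : Set (EItem N T) :=
  limit (fun J => Scan Ts k (Complete k (Predict G k J))) I

/-- The pair `(𝔍ₖᵘ, 𝒯ₖᵘ)`, starting from the item set `J₀` at position `k`: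
`𝒯ₖ⁰ = ∅`, `𝒯ₖᵘ⁺¹ = Tokens 𝒯ₖᵘ k 𝔍ₖᵘ` and `𝔍ₖᵘ⁺¹ = πₖ 𝒯ₖᵘ⁺¹ 𝔍ₖᵘ`. -/
def Jstage (k : ℕ) (J₀ : Set (EItem N T)) : ℕ → Set (EItem N T) × Set (Token T C)
  | 0 => (J₀, ∅)
  | u + 1 =>
      let JT := Jstage k J₀ u
      let T' := Tokens ll D JT.2 k JT.1
      (pik G T' k JT.1, T')

/-- `𝔍ₖ⁰`:  `𝔍₀⁰ = π₀ ∅ Init` and `𝔍ₖ₊₁⁰ = πₖ₊₁ ∅ 𝓘ₖ`. -/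
def Jinit : ℕ → Set (EItem N T)
  | 0 => pik G (∅ : Set (Token T C)) 0 (EInit G)
  | k + 1 => pik G (∅ : Set (Token T C)) (k + 1) (⋃ u, (Jstage G ll D k (Jinit k) u).1)

/-- The item sets `𝔍ₖᵘ`. -/
def Jset (k u : ℕ) : Set (EItem N T) := (Jstage G ll D k (Jinit G ll D k) u).1

/-- The token sets `𝒯ₖᵘ`. -/
def Tset (k u : ℕ) : Set (Token T C) := (Jstage G ll D k (Jinit G ll D k) u).2

/-- `𝓘ₖ = ⋃ u, 𝔍ₖᵘ`. -/
def Ibin (k : ℕ) : Set (EItem N T) := ⋃ u, Jset G ll D k u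

/-- `𝕴 = 𝓘_{|D|}`. -/
def Items : Set (EItem N T) := Ibin G ll D D.length

/-- An item `(N → α • β, i, j)` is `p`-valid. -/
def pValid (p : List (Token T C)) (x : EItem N T) : Prop :=
  (x.lhs, x.pre ++ x.post) ∈ G.rules ∧
  ∃ u ≤ p.length, ∃ γ,
    (chars p).length = x.bin ∧
    (chars (p.take u)).length = x.origin ∧
    G.Derives [Sum.inl G.start] ((terms (p.take u)).map Sum.inr ++ Sum.inl x.lhs :: γ) ∧
    G.Derives x.pre ((terms (p.drop u)).map Sum.inr)

/-- `⟨P⟩ = { x | ∃ p ∈ P. x is p-valid }`. -/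
def Gen (P : Set (List (Token T C))) : Set (EItem N T) :=
  {x | ∃ p ∈ P, pValid G p x}

/-! Paths grow only through `Append`, whose side condition keeps `[p t] ∈ ℒ_prefix`, and which
keeps `p̄ t̄` a prefix of `D` because `t` is lexed at position `|p̄|`, so that `t̄` is a prefix of
`D.drop |p̄|`. Induction on the position `k` and then on the stage `u` does the rest. -/

def prefixPaths : Set (List (Token T C)) := {p | terms p ∈ G.langPrefix ∧ chars p <+: D}

theorem subset_limit {α : Type*} (f : Set α → Set α) (X : Set α) : X ⊆ limit f X :=
  Set.subset_iUnion (fun n => f^[n] X) 0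

theorem limit_subset {α : Type*} {f : Set α → Set α} {X S : Set α}
    (hf : ∀ Y ⊆ S, f Y ⊆ S) (hX : X ⊆ S) : limit f X ⊆ S := by
  refine Set.iUnion_subset fun n => ?_
  induction n with
  | zero => exact hX
  | succ n ih => exact Function.iterate_succ_apply' f n X ▸ hf _ ih

theorem nil_mem_langPrefix : ([] : List T) ∈ G.langPrefix :=
  ⟨[Sum.inl G.start], Relation.ReflTransGen.refl⟩

theorem chars_append (p q : List (Token T C)) : chars (p ++ q) = chars p ++ chars q := by
  simp [chars]

theorem Wtok_mono {P Q : Set (List (Token T C))} (h : P ⊆ Q) (k : ℕ) :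
    Wtok G ll D P k ⊆ Wtok G ll D Q k := by
  rintro x ⟨hx, p, hp, hlen, hlang⟩
  exact ⟨hx, p, h hp, hlen, hlang⟩

theorem Pstage_fst_subset_succ (k : ℕ) (P₀ : Set (List (Token T C))) (u : ℕ) :
    (Pstage G ll D k P₀ u).1 ⊆ (Pstage G ll D k P₀ (u + 1)).1 :=
  subset_limit _ _

theorem Pstage_snd_subset_Wtok (k : ℕ) (P₀ : Set (List (Token T C))) (u : ℕ) :
    (Pstage G ll D k P₀ u).2 ⊆ Wtok G ll D (Pstage G ll D k P₀ u).1 k := by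
  induction u with
  | zero => exact Set.empty_subset _
  | succ u ih =>
    exact (ll.sel_sound _ _ ih).2.trans
      (Wtok_mono G ll D (Pstage_fst_subset_succ G ll D k P₀ u) k)

theorem Pstage_snd_subset_Xtok (k : ℕ) (P₀ : Set (List (Token T C))) (u : ℕ) :
    (Pstage G ll D k P₀ u).2 ⊆ Xtok ll D k :=
  fun _ hx => (Pstage_snd_subset_Wtok G ll D k P₀ u hx).1

theorem chars_append_singleton_prefix_of_mem_Xtok {p : List (Token T C)} {k : ℕ} {t : Token T C}
    (hp : chars p <+: D) (hlen : (chars p).length = k) (ht : t ∈ Xtok ll D k) :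
    chars (p ++ [t]) <+: D := by
  have htD : t.2 <+: D.drop k := (ll.lex_sound t.1 D k t ht).2.2
  have hpD : chars p = D.take k := hlen ▸ List.prefix_iff_eq_take.mp hp
  rw [chars_append, hpD, ← List.take_append_drop k D]
  simpa [chars] using (List.prefix_append_right_inj (D.take k)).mpr htD

theorem Append_subset_prefixPaths {k : ℕ} {Z : Set (Token T C)} (hZ : Z ⊆ Xtok ll D k)
    {P : Set (List (Token T C))} (hP : P ⊆ prefixPaths G D) :
    Append G k Z P ⊆ prefixPaths G D := by
  rintro q (hq | ⟨p, hp, t, ht, rfl, hlen, hlang⟩)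
  · exact hP hq
  · exact ⟨hlang, chars_append_singleton_prefix_of_mem_Xtok ll D (hP hp).2 hlen (hZ ht)⟩

theorem Pstage_subset_prefixPaths (k : ℕ) {P₀ : Set (List (Token T C))}
    (h₀ : P₀ ⊆ prefixPaths G D) (u : ℕ) : (Pstage G ll D k P₀ u).1 ⊆ prefixPaths G D := by
  induction u with
  | zero => exact h₀
  | succ u ih =>
    have hZ := Pstage_snd_subset_Xtok G ll D k P₀ (u + 1)
    exact limit_subset (fun _ hY => Append_subset_prefixPaths G ll D hZ hY) ih

theorem Pinit_subset_prefixPaths (k : ℕ) : Pinit G ll D k ⊆ prefixPaths G D := by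
  induction k with
  | zero =>
    rintro p rfl
    exact ⟨nil_mem_langPrefix G, List.nil_prefix⟩
  | succ k ih => exact Set.iUnion_subset (Pstage_subset_prefixPaths G ll D k ih)

theorem path_prefix_invariant_general {N T C : Type*} (G : CFG N T) (ll : LocalLexing T C)
    (D : List C) (k : ℕ) (u : ℕ)
    (p : List (Token T C)) (hp : p ∈ Pset G ll D k u) :
    terms p ∈ G.langPrefix ∧ chars p <+: D :=
  Pstage_subset_prefixPaths G ll D k (Pinit_subset_prefixPaths G ll D k) u hp

/-- Prefix invariant of paths: every `p ∈ 𝒫ₖᵘ` satisfies `[p] ∈ ℒ_prefix` and `p̄` is a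
prefix of `D`. -/
theorem path_prefix_invariant {N T C : Type*} (G : CFG N T) (ll : LocalLexing T C)
    (D : List C) (k : ℕ) (hk : k ≤ D.length) (u : ℕ)
    (p : List (Token T C)) (hp : p ∈ Pset G ll D k u) :
    terms p ∈ G.langPrefix ∧ chars p <+: D :=
  path_prefix_invariant_general G ll D k u p hp

end Defs
end LL
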